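/- Expected determinant under leverage score sampling: let x ~ D_X with second moment Sigma, and define the leverage-score measure Lev with density l(x)/tr(Sigma Sigma_hat^{-1}) relative to D_X, where l(x) = x^T Sigma_hat^{-1} x. If x_1,...,x_t are i.i.d. from Lev and x~_i = sqrt(d/l(x_i)) x_i, Sigma~ = (1/t) sum_i x~_i x~_i^T, then E[det(Sigma~ Sigma_hat^{-1})] >= (1 - d^2/t) * det(Sigma Sigma_hat^{-1}) / (tr(Sigma Sigma_hat^{-1})/d)^d. -/

import Mathlib

/-!
Here `t Σ̃ = ∑ᵢ uᵢ xᵢᵀ` with `uᵢ = (d / l(xᵢ)) xᵢ`. Expanding `det (∑ᵢ uᵢ xᵢᵀ)` multilinearly in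
its columns `∑ᵢ xᵢⱼ uᵢ`, the terms in which two columns come from the same sample vanish (they are
proportional), and each of the remaining `t(t-1)⋯(t-d+1)` terms has its columns built from
distinct independent samples, so its expectation is `det E[u xᵀ]`. Under the leverage measure
`E[(d / l(x)) x xᵀ] = (d / T) Σ` with `T = tr(Σ Σ̂⁻¹)`, hence
`E[det(Σ̃ Σ̂⁻¹)] = t(t-1)⋯(t-d+1) t⁻ᵈ (d / T)ᵈ det(Σ Σ̂⁻¹)`, and Bernoulli's inequality gives
`t(t-1)⋯(t-d+1) t⁻ᵈ ≥ (1 - d/t)ᵈ ≥ 1 - d²/t`.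
-/

open MeasureTheory Matrix Function Finset

section IndependentCoordinates

variable {α ι κ M : Type*} [Fintype ι] [Fintype κ]

theorem prod_comp_eq_prod_extend [CommMonoid M] {f : ι → κ} (hf : Injective f)
    (g : ι → α → M) (w : κ → α) :
    ∏ j, g j (w (f j)) = ∏ k, extend f g 1 k (w k) :=
  Fintype.prod_of_injective f hf _ _
    (fun k hk => by rw [extend_apply' _ _ _ (by simpa using hk)]; rfl)
    (fun j => by rw [hf.extend_apply])

variable [MeasurableSpace α] (ν : Measure α) [IsProbabilityMeasure ν]

theorem integrable_prod_comp_of_injective {f : ι → κ} (hf : Injective f) {g : ι → α → ℝ}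
    (hg : ∀ j, Integrable (g j) ν) :
    Integrable (fun w : κ → α => ∏ j, g j (w (f j))) (Measure.pi fun _ => ν) := by
  simp_rw [prod_comp_eq_prod_extend hf]
  refine Integrable.fintype_prod fun k => ?_
  by_cases hk : ∃ j, f j = k
  · obtain ⟨j, rfl⟩ := hk
    simpa [hf.extend_apply] using hg j
  · rw [extend_apply' _ _ _ hk]
    exact integrable_const 1

theorem integral_prod_comp_of_injective {f : ι → κ} (hf : Injective f) (g : ι → α → ℝ) :
    ∫ w : κ → α, ∏ j, g j (w (f j)) ∂(Measure.pi fun _ => ν) = ∏ j, ∫ x, g j x ∂ν := by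
  simp_rw [prod_comp_eq_prod_extend hf, integral_fintype_prod_eq_prod]
  refine (Fintype.prod_of_injective f hf _ _ (fun k hk => ?_) (fun j => ?_)).symm
  · rw [extend_apply' _ _ _ (by simpa using hk)]
    simp
  · rw [hf.extend_apply]

end IndependentCoordinates

section Determinant

variable {n κ : Type*} [Fintype n] [DecidableEq n] [Fintype κ]

theorem det_sum_vecMulVec {R : Type*} [CommRing R] [DecidableEq κ] (u v : κ → n → R) :
    det (∑ i, vecMulVec (u i) (v i)) =
      ∑ f : n → κ with Injective f, det (of fun j => v (f j) j • u (f j)) := by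
  have hrows : (∑ i, vecMulVec (u i) (v i))ᵀ = of fun j => ∑ i, v i j • u i := by
    ext j a
    simp [vecMulVec_apply, Matrix.sum_apply, mul_comm]
  rw [← det_transpose, hrows]
  refine ((detRowAlternating : (n → R) [⋀^n]→ₗ[R] R).map_sum _).trans
    (Finset.sum_filter_of_ne fun f _ hf => ?_).symm
  contrapose! hf
  change detRowAlternating (fun j => v (f j) j • u (f j)) = 0
  rw [AlternatingMap.map_smul_univ, AlternatingMap.map_eq_zero_of_not_injective _
    (fun j => u (f j)) fun hu => hf (Injective.of_comp (f := u) hu), smul_zero]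

variable {α : Type*} [MeasurableSpace α] (ν : Measure α) [IsProbabilityMeasure ν]

theorem integrable_det_of_injective {f : n → κ} (hf : Injective f) {C : n → α → n → ℝ}
    (hC : ∀ j a, Integrable (fun x => C j x a) ν) :
    Integrable (fun w : κ → α => det (of fun j => C j (w (f j)))) (Measure.pi fun _ => ν) := by
  simp_rw [det_apply']
  refine integrable_finsetSum _ fun σ _ => Integrable.const_mul ?_ _
  exact integrable_prod_comp_of_injective ν (hf.comp σ.injective) fun i => hC (σ i) i

theorem integral_det_of_injective {f : n → κ} (hf : Injective f) {C : n → α → n → ℝ}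
    (hC : ∀ j a, Integrable (fun x => C j x a) ν) :
    ∫ w : κ → α, det (of fun j => C j (w (f j))) ∂(Measure.pi fun _ => ν) =
      det (of fun j a => ∫ x, C j x a ∂ν) := by
  simp_rw [det_apply']
  rw [integral_finsetSum _ fun σ _ => Integrable.const_mul
    (integrable_prod_comp_of_injective ν (hf.comp σ.injective) fun i => hC (σ i) i) _]
  refine Finset.sum_congr rfl fun σ _ => ?_
  simp only [of_apply]
  rw [integral_const_mul, integral_prod_comp_of_injective ν (f := fun i => f (σ i))
    (hf.comp σ.injective) fun i x => C (σ i) x i]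

theorem integral_det_sum_vecMulVec [DecidableEq κ] {u v : α → n → ℝ}
    (huv : ∀ a b, Integrable (fun x => u x a * v x b) ν) :
    ∫ w : κ → α, det (∑ i, vecMulVec (u (w i)) (v (w i))) ∂(Measure.pi fun _ => ν) =
      (Fintype.card κ).descFactorial (Fintype.card n) *
        det (of fun a b => ∫ x, u x a * v x b ∂ν) := by
  have hC : ∀ j a, Integrable (fun x => (v x j • u x) a) ν := fun j a => by
    simpa [mul_comm] using huv a j
  have hterm : ∀ f ∈ ({f : n → κ | Injective f} : Finset _),
      ∫ w : κ → α, det (of fun j => v (w (f j)) j • u (w (f j))) ∂(Measure.pi fun _ => ν) =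
        det (of fun a b => ∫ x, u x a * v x b ∂ν) := fun f hf => by
    rw [integral_det_of_injective ν (Finset.mem_filter.1 hf).2 hC, ← det_transpose]
    congr 1
    ext a b
    simp [mul_comm]
  have hcard : #{f : n → κ | Injective f} = (Fintype.card κ).descFactorial (Fintype.card n) := by
    rw [← Fintype.card_subtype, Fintype.card_congr (Equiv.subtypeInjectiveEquivEmbedding n κ),
      Fintype.card_embedding_eq]
  simp_rw [det_sum_vecMulVec]
  rw [integral_finsetSum _ fun f hf => integrable_det_of_injective ν (Finset.mem_filter.1 hf).2 hC,
    Finset.sum_congr rfl hterm, Finset.sum_const, nsmul_eq_mul, hcard]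

end Determinant

theorem one_sub_sq_div_le_descFactorial_div_pow {d t : ℕ} (h : d ≤ t) :
    1 - (d : ℝ) ^ 2 / t ≤ t.descFactorial d / (t : ℝ) ^ d := by
  rcases Nat.eq_zero_or_pos t with rfl | ht
  · obtain rfl : d = 0 := Nat.le_zero.1 h
    simp
  have ht' : (0 : ℝ) < t := Nat.cast_pos.2 ht
  have hdt : (d : ℝ) ≤ t := Nat.cast_le.2 h
  calc 1 - (d : ℝ) ^ 2 / t = 1 + d * (-(d / t)) := by ring
    _ ≤ (1 + -(d / t)) ^ d := one_add_mul_le_pow (by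
        have : (d : ℝ) / t ≤ 1 := (div_le_one ht').2 hdt
        linarith) d
    _ = ((t : ℝ) - d) ^ d / (t : ℝ) ^ d := by
        rw [← div_pow]
        congr 1
        field_simp
        ring
    _ ≤ t.descFactorial d / (t : ℝ) ^ d := by
        gcongr
        calc ((t : ℝ) - d) ^ d ≤ ((t + 1 - d : ℕ) : ℝ) ^ d := by
              gcongr
              rw [Nat.cast_sub (by omega)]
              push_cast
              linarith
          _ ≤ t.descFactorial d := by exact_mod_cast Nat.pow_sub_le_descFactorial t d

theorem div_mul_mul_div_eq_of_imp {y z : ℝ} (h : y = 0 → z = 0) (c T : ℝ) :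
    c / y * z * (y / T) = c / T * z := by
  rcases eq_or_ne y 0 with hy | hy
  · simp [hy, h hy]
  · field_simp

theorem Matrix.PosSemidef.dotProduct_mulVec_self_nonneg {n : Type*} [Fintype n]
    {P : Matrix n n ℝ} (hP : P.PosSemidef) (x : n → ℝ) : 0 ≤ x ⬝ᵥ (P *ᵥ x) :=
  hP.dotProduct_mulVec_nonneg x

theorem Matrix.PosDef.dotProduct_mulVec_self_eq_zero_iff {n : Type*} [Fintype n]
    {P : Matrix n n ℝ} (hP : P.PosDef) {x : n → ℝ} : x ⬝ᵥ (P *ᵥ x) = 0 ↔ x = 0 := by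
  refine ⟨fun hx => by_contra fun hx0 => (hP.dotProduct_mulVec_pos hx0).ne' hx, ?_⟩
  rintro rfl
  simp

section SecondMoment

variable {n : Type*} [Fintype n] {μ : Measure (n → ℝ)}

noncomputable def secondMoment (μ : Measure (n → ℝ)) : Matrix n n ℝ :=
  of fun i j => ∫ x, x i * x j ∂μ

theorem dotProduct_mulVec_self_eq_sum (P : Matrix n n ℝ) (x : n → ℝ) :
    x ⬝ᵥ (P *ᵥ x) = ∑ a, ∑ b, x a * x b * P b a := by
  simp only [dotProduct, mulVec, Finset.mul_sum]
  rw [Finset.sum_comm]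
  exact Finset.sum_congr rfl fun a _ => Finset.sum_congr rfl fun b _ => by ring

theorem integrable_dotProduct_mulVec (hμ : ∀ i j, Integrable (fun x => x i * x j) μ)
    (P : Matrix n n ℝ) : Integrable (fun x => x ⬝ᵥ (P *ᵥ x)) μ := by
  simp_rw [dotProduct_mulVec_self_eq_sum]
  exact integrable_finsetSum _ fun a _ => integrable_finsetSum _ fun b _ => (hμ a b).mul_const _

theorem integral_dotProduct_mulVec (hμ : ∀ i j, Integrable (fun x => x i * x j) μ)
    (P : Matrix n n ℝ) : ∫ x, x ⬝ᵥ (P *ᵥ x) ∂μ = trace (secondMoment μ * P) := by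
  simp_rw [dotProduct_mulVec_self_eq_sum, trace, Matrix.diag_apply, mul_apply]
  rw [integral_finsetSum _ fun a _ =>
    integrable_finsetSum _ fun b _ => (hμ a b).mul_const _]
  refine Finset.sum_congr rfl fun a _ => ?_
  rw [integral_finsetSum _ fun b _ => (hμ a b).mul_const _]
  exact Finset.sum_congr rfl fun b _ => integral_mul_const _ _

theorem posSemidef_secondMoment (hμ : ∀ i j, Integrable (fun x => x i * x j) μ) :
    (secondMoment μ).PosSemidef := by
  refine .of_dotProduct_mulVec_nonneg ?_ fun v => ?_
  · ext a b
    simp only [secondMoment, conjTranspose_apply, of_apply, star_trivial, mul_comm]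
  · rw [star_trivial, dotProduct_comm, ← trace_vecMulVec, ← mul_vecMulVec,
      ← integral_dotProduct_mulVec hμ]
    refine integral_nonneg fun x => ?_
    rw [vecMulVec_mulVec, op_smul_eq_smul, dotProduct_smul, smul_eq_mul, dotProduct_comm x v]
    exact mul_self_nonneg _

theorem trace_secondMoment_mul_pos (hμ : ∀ i j, Integrable (fun x => x i * x j) μ)
    {P : Matrix n n ℝ} (hP : P.PosDef) (hS : secondMoment μ ≠ 0) :
    0 < trace (secondMoment μ * P) := by
  have hl := hP.posSemidef.dotProduct_mulVec_self_nonneg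
  rw [← integral_dotProduct_mulVec hμ]
  refine (integral_nonneg hl).lt_of_ne fun h0 => hS ?_
  have hzero : ∀ᵐ x ∂μ, x = 0 := by
    filter_upwards [(integral_eq_zero_iff_of_nonneg hl (integrable_dotProduct_mulVec hμ P)).1
      h0.symm] with x hx
    exact hP.dotProduct_mulVec_self_eq_zero_iff.1 hx
  ext a b
  exact integral_eq_zero_of_ae (hzero.mono fun x hx => by simp [hx])

end SecondMoment

section Leverage

variable {n : Type*} [Fintype n] {μ : Measure (n → ℝ)} {P : Matrix n n ℝ}

/-- The leverage-score distribution of the paper, with `P` in the role of `Σ̂⁻¹`. -/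
noncomputable def leverageMeasure (μ : Measure (n → ℝ)) (P : Matrix n n ℝ) : Measure (n → ℝ) :=
  μ.withDensity fun x => ENNReal.ofReal (x ⬝ᵥ (P *ᵥ x) / trace (secondMoment μ * P))

theorem measurable_leverageDensity (P : Matrix n n ℝ) (T : ℝ) :
    Measurable fun x : n → ℝ => ENNReal.ofReal (x ⬝ᵥ (P *ᵥ x) / T) := by
  fun_prop

theorem integral_leverageMeasure (hP : P.PosSemidef) (hT : 0 ≤ trace (secondMoment μ * P))
    (g : (n → ℝ) → ℝ) :
    ∫ x, g x ∂leverageMeasure μ P = ∫ x, g x * (x ⬝ᵥ (P *ᵥ x) / trace (secondMoment μ * P)) ∂μ := by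
  rw [leverageMeasure, integral_withDensity_eq_integral_toReal_smul (measurable_leverageDensity P _)
    (.of_forall fun _ => ENNReal.ofReal_lt_top)]
  refine integral_congr_ae (.of_forall fun x => ?_)
  simp only [smul_eq_mul]
  rw [ENNReal.toReal_ofReal (div_nonneg (hP.dotProduct_mulVec_self_nonneg x) hT),
    mul_comm]

theorem integrable_leverageMeasure_iff (hP : P.PosSemidef) (hT : 0 ≤ trace (secondMoment μ * P))
    {g : (n → ℝ) → ℝ} :
    Integrable g (leverageMeasure μ P) ↔
      Integrable (fun x => g x * (x ⬝ᵥ (P *ᵥ x) / trace (secondMoment μ * P))) μ := by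
  rw [leverageMeasure, integrable_withDensity_iff (measurable_leverageDensity P _)
    (.of_forall fun _ => ENNReal.ofReal_lt_top)]
  refine integrable_congr (.of_forall fun x => ?_)
  simp only
  rw [ENNReal.toReal_ofReal (div_nonneg (hP.dotProduct_mulVec_self_nonneg x) hT)]

theorem isProbabilityMeasure_leverageMeasure (hμ : ∀ i j, Integrable (fun x => x i * x j) μ)
    (hP : P.PosSemidef) (hT : 0 < trace (secondMoment μ * P)) :
    IsProbabilityMeasure (leverageMeasure μ P) := by
  constructor
  rw [leverageMeasure, withDensity_apply _ MeasurableSet.univ, setLIntegral_univ,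
    ← ofReal_integral_eq_lintegral_ofReal ((integrable_dotProduct_mulVec hμ P).div_const _)
      (.of_forall fun x => div_nonneg (hP.dotProduct_mulVec_self_nonneg x) hT.le),
    integral_div, integral_dotProduct_mulVec hμ, div_self hT.ne', ENNReal.ofReal_one]

theorem integral_det_sum_leverage {κ : Type*} [DecidableEq n] [Fintype κ] [DecidableEq κ]
    (hμ : ∀ i j, Integrable (fun x => x i * x j) μ) (hP : P.PosDef)
    (hT : 0 < trace (secondMoment μ * P)) (c : ℝ) :
    ∫ w : κ → (n → ℝ), det (∑ i, (c / (w i ⬝ᵥ (P *ᵥ w i))) • vecMulVec (w i) (w i))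
        ∂(Measure.pi fun _ => leverageMeasure μ P) =
      (Fintype.card κ).descFactorial (Fintype.card n) *
        ((c / trace (secondMoment μ * P)) ^ Fintype.card n * det (secondMoment μ)) := by
  have := isProbabilityMeasure_leverageMeasure hμ hP.posSemidef hT
  have hentry : ∀ x : n → ℝ, ∀ a b, ((c / (x ⬝ᵥ (P *ᵥ x))) • x) a * x b *
      (x ⬝ᵥ (P *ᵥ x) / trace (secondMoment μ * P)) =
        c / trace (secondMoment μ * P) * (x a * x b) := fun x a b => by
    rw [Pi.smul_apply, smul_eq_mul, mul_assoc (c / _) (x a)]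
    refine div_mul_mul_div_eq_of_imp (fun hx => ?_) _ _
    simp [hP.dotProduct_mulVec_self_eq_zero_iff.1 hx]
  have hint : ∀ a b, Integrable (fun x : n → ℝ => ((c / (x ⬝ᵥ (P *ᵥ x))) • x) a * x b)
      (leverageMeasure μ P) := fun a b => by
    rw [integrable_leverageMeasure_iff hP.posSemidef hT.le]
    simp_rw [hentry]
    exact (hμ a b).const_mul _
  have hmean : (of fun a b => ∫ x, ((c / (x ⬝ᵥ (P *ᵥ x))) • x) a * x b ∂leverageMeasure μ P) =
      (c / trace (secondMoment μ * P)) • secondMoment μ := by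
    ext a b
    rw [of_apply, integral_leverageMeasure hP.posSemidef hT.le]
    simp_rw [hentry]
    exact integral_const_mul _ _
  simp_rw [← smul_vecMulVec]
  rw [integral_det_sum_vecMulVec _ hint, hmean, det_smul]

end Leverage

theorem stmt19_general (d t : ℕ) (hd : 0 < d) (hdt : d ≤ t)
    (μ : Measure (Fin d → ℝ))
    (hint : ∀ i j : Fin d, Integrable (fun x => x i * x j) μ)
    (Sg : Matrix (Fin d) (Fin d) ℝ)
    (hSg : Sg = Matrix.of fun i j => ∫ x, x i * x j ∂μ)
    (hinv : IsUnit Sg.det)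
    (Sh : Matrix (Fin d) (Fin d) ℝ) (hSh : Sh.PosDef) :
    (1 - (d : ℝ) ^ 2 / t) * (Sg * Sh⁻¹).det / ((Sg * Sh⁻¹).trace / d) ^ d
      ≤ ∫ w : Fin t → (Fin d → ℝ),
          ((((1 : ℝ) / t) • ∑ i, ((d : ℝ) / (w i ⬝ᵥ (Sh⁻¹ *ᵥ w i))) •
              vecMulVec (w i) (w i)) * Sh⁻¹).det
        ∂(Measure.pi fun _ : Fin t =>
          μ.withDensity fun x =>
            ENNReal.ofReal ((x ⬝ᵥ (Sh⁻¹ *ᵥ x)) / (Sg * Sh⁻¹).trace)) := by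
  obtain rfl : Sg = secondMoment μ := hSg
  have : Nonempty (Fin d) := ⟨⟨0, hd⟩⟩
  set T := trace (secondMoment μ * Sh⁻¹)
  have hT : 0 < T := trace_secondMoment_mul_pos hint hSh.inv fun h0 => by simp [h0] at hinv
  have hE := integral_det_sum_leverage (κ := Fin t) hint hSh.inv hT d
  rw [Fintype.card_fin, Fintype.card_fin] at hE
  have hdet_nonneg : 0 ≤ det (secondMoment μ) * det Sh⁻¹ * ((d : ℝ) / T) ^ d :=
    mul_nonneg (mul_nonneg (posSemidef_secondMoment hint).det_nonneg hSh.inv.det_pos.le)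
      (by positivity)
  calc (1 - (d : ℝ) ^ 2 / t) * det (secondMoment μ * Sh⁻¹) / (T / d) ^ d
      = (1 - (d : ℝ) ^ 2 / t) * (det (secondMoment μ) * det Sh⁻¹ * ((d : ℝ) / T) ^ d) := by
        rw [det_mul, div_pow, div_pow]
        field_simp
    _ ≤ (t.descFactorial d / (t : ℝ) ^ d) *
          (det (secondMoment μ) * det Sh⁻¹ * ((d : ℝ) / T) ^ d) :=
        mul_le_mul_of_nonneg_right (one_sub_sq_div_le_descFactorial_div_pow hdt) hdet_nonneg
    _ = ((1 : ℝ) / t) ^ d * det Sh⁻¹ * ∫ w : Fin t → (Fin d → ℝ),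
          det (∑ i, ((d : ℝ) / (w i ⬝ᵥ (Sh⁻¹ *ᵥ w i))) • vecMulVec (w i) (w i))
          ∂(Measure.pi fun _ => leverageMeasure μ Sh⁻¹) := by
        rw [hE]
        ring
    _ = _ := by
        rw [← integral_const_mul]
        refine integral_congr_ae (.of_forall fun w => ?_)
        simp only [det_mul, det_smul, Fintype.card_fin]
        ring

/-- Expected determinant under i.i.d. leverage score sampling:
`E[det(Σ̃ Σ̂⁻¹)] ≥ (1 - d²/t) det(ΣΣ̂⁻¹) / (tr(ΣΣ̂⁻¹)/d)^d`. -/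
theorem stmt19 (d t : ℕ) (hd : 0 < d) (hdt : d ≤ t)
    (μ : Measure (Fin d → ℝ)) [IsProbabilityMeasure μ]
    (hint : ∀ i j : Fin d, Integrable (fun x => x i * x j) μ)
    (Sg : Matrix (Fin d) (Fin d) ℝ)
    (hSg : Sg = Matrix.of fun i j => ∫ x, x i * x j ∂μ)
    (hinv : IsUnit Sg.det)
    (Sh : Matrix (Fin d) (Fin d) ℝ) (hSh : Sh.PosDef) :
    (1 - (d : ℝ) ^ 2 / t) * (Sg * Sh⁻¹).det / ((Sg * Sh⁻¹).trace / d) ^ d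
      ≤ ∫ w : Fin t → (Fin d → ℝ),
          ((((1 : ℝ) / t) • ∑ i, ((d : ℝ) / (w i ⬝ᵥ (Sh⁻¹ *ᵥ w i))) •
              vecMulVec (w i) (w i)) * Sh⁻¹).det
        ∂(Measure.pi fun _ : Fin t =>
          μ.withDensity fun x =>
            ENNReal.ofReal ((x ⬝ᵥ (Sh⁻¹ *ᵥ x)) / (Sg * Sh⁻¹).trace)) :=
  stmt19_general d t hd hdt μ hint Sg hSg hinv Sh hSh
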